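/- arXiv:2112.03988 — 2 statements merged into one kernel-verified Lean document; each statement's English description precedes it below -/
import Mathlib

section
/- Let (A, θ) be a Z₂-graded unital C*-algebra. The restriction map ω ↦ ω|_{A₊} is an affine bijection from the set of even states of A onto the set of states of A₊. Consequently, an even state ω is an extreme point of the convex set of even states if and only if ω|_{A₊} is a pure state of A₊. -/
open scoped ComplexOrder

/-- A state on a unital C*-algebra: a unital positive continuous linear functional. -/
def IsState {A : Type*} [NormedRing A] [StarRing A] [NormedAlgebra ℂ A]
    (φ : A →L[ℂ] ℂ) : Prop :=
  φ 1 = 1 ∧ ∀ a : A, 0 ≤ φ (star a * a)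

/-- The set of even states of a Z₂-graded C*-algebra. -/
def evenStates {A : Type*} [NormedRing A] [StarRing A] [NormedAlgebra ℂ A]
    (θ : A ≃⋆ₐ[ℂ] A) : Set (A →L[ℂ] ℂ) :=
  {φ | IsState φ ∧ ∀ a : A, φ (θ a) = φ a}

/-- The even part of a Z₂-graded C*-algebra, as a *-subalgebra. -/
def evenSA {A : Type*} [NormedRing A] [StarRing A] [NormedAlgebra ℂ A] [StarModule ℂ A]
    (θ : A ≃⋆ₐ[ℂ] A) : StarSubalgebra ℂ A where
  carrier := {a : A | θ a = a}
  mul_mem' := fun ha hb => by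
    simp only [Set.mem_setOf_eq] at *; rw [map_mul, ha, hb]
  add_mem' := fun ha hb => by
    simp only [Set.mem_setOf_eq] at *; rw [map_add, ha, hb]
  algebraMap_mem' := fun c => by
    simp only [Set.mem_setOf_eq, AlgHomClass.commutes]
  star_mem' := fun ha => by
    simp only [Set.mem_setOf_eq] at *; rw [map_star, ha]

/-- The continuous linear inclusion of the even part into the algebra. -/
def inclL {A : Type*} [NormedRing A] [StarRing A] [NormedAlgebra ℂ A] [StarModule ℂ A]
    (θ : A ≃⋆ₐ[ℂ] A) : ↥(evenSA θ) →L[ℂ] A :=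
  ⟨{ toFun := fun x => (x : A)
     map_add' := fun _ _ => rfl
     map_smul' := fun _ _ => rfl }, continuous_subtype_val⟩

/-! An even state `φ` satisfies `φ a = φ (P a)`, where `P a = (a + θ a) / 2` is the projection
onto `A₊`; hence restriction is injective on even states, and a state `ψ` of `A₊` is the
restriction of the even state `ψ ∘ P`. Positivity of `ψ ∘ P` comes from
`P (a⋆a) = (P a)⋆(P a) + v⋆v` with `v = (a - θ a) / 2` the odd part of `a`: `v⋆v` is even and
positive, so its square root lies in `A₊`. A linear bijection from a convex set onto another
preserves extreme points. -/

open Set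

theorem mem_extremePoints_iff_of_bijOn {𝕜 E F : Type*} [Ring 𝕜] [PartialOrder 𝕜]
    [IsOrderedRing 𝕜] [AddCommGroup E] [Module 𝕜 E] [AddCommGroup F] [Module 𝕜 F] (f : E →ₗ[𝕜] F)
    {s : Set E} {t : Set F} (hs : Convex 𝕜 s) (hf : BijOn f s t) {x : E} (hx : x ∈ s) :
    x ∈ extremePoints 𝕜 s ↔ f x ∈ extremePoints 𝕜 t := by
  simp only [mem_extremePoints, hx, hf.mapsTo hx, true_and]
  constructor
  · intro hext y₁ hy₁ y₂ hy₂ hfx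
    obtain ⟨x₁, hx₁, rfl⟩ := hf.surjOn hy₁
    obtain ⟨x₂, hx₂, rfl⟩ := hf.surjOn hy₂
    obtain ⟨z, hz, hfz⟩ := (image_openSegment 𝕜 f.toAffineMap x₁ x₂).symm ▸ hfx
    obtain rfl : z = x := hf.injOn (hs.openSegment_subset hx₁ hx₂ hz) hx hfz
    obtain ⟨rfl, rfl⟩ := hext x₁ hx₁ x₂ hx₂ hz
    exact ⟨rfl, rfl⟩
  · intro hext x₁ hx₁ x₂ hx₂ hx'
    obtain ⟨h₁, h₂⟩ := hext (f x₁) (hf.mapsTo hx₁) (f x₂) (hf.mapsTo hx₂)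
      (image_openSegment 𝕜 f.toAffineMap x₁ x₂ ▸ mem_image_of_mem f hx')
    exact ⟨hf.injOn hx₁ hx h₁, hf.injOn hx₂ hx h₂⟩

section Sqrt

variable {A B : Type*} [NonUnitalCStarAlgebra A] [PartialOrder A] [StarOrderedRing A]
  [NonUnitalCStarAlgebra B] [PartialOrder B] [StarOrderedRing B]

lemma map_sqrt {F : Type*} [FunLike F A B] [NonUnitalRingHomClass F A B]
    [NonUnitalStarRingHomClass F A B]
    (f : F) {a : A} (ha : 0 ≤ a) : f (CFC.sqrt a) = CFC.sqrt (f a) :=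
  (CFC.sqrt_unique (by rw [← map_mul, CFC.sqrt_mul_sqrt_self a])
    (map_nonneg f (CFC.sqrt_nonneg a))).symm

end Sqrt

lemma half_smul_star_mul_self_add {R : Type*} [Ring R] [StarRing R] [Module ℂ R]
    [StarModule ℂ R] [IsScalarTower ℂ R R] [SMulCommClass ℂ R R] (a b : R) :
    (2⁻¹ : ℂ) • (star a * a + star b * b) =
      star ((2⁻¹ : ℂ) • (a + b)) * ((2⁻¹ : ℂ) • (a + b)) +
        star ((2⁻¹ : ℂ) • (a - b)) * ((2⁻¹ : ℂ) • (a - b)) := by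
  have : star (2⁻¹ : ℂ) = 2⁻¹ := by simp
  simp only [star_smul, this, star_add, star_sub, smul_mul_smul_comm, add_mul, mul_add, sub_mul,
    mul_sub]
  module

section Graded

variable {A : Type*} [NormedRing A] [StarRing A] [NormedAlgebra ℂ A] (θ : A ≃⋆ₐ[ℂ] A)

lemma convex_evenStates : Convex ℝ (evenStates θ) := by
  rintro φ₁ ⟨⟨h₁one, h₁pos⟩, h₁even⟩ φ₂ ⟨⟨h₂one, h₂pos⟩, h₂even⟩ s t hs ht hst
  have happ (a : A) : (s • φ₁ + t • φ₂) a = (s : ℂ) * φ₁ a + (t : ℂ) * φ₂ a := by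
    simp [Complex.real_smul]
  refine ⟨⟨?_, fun a => ?_⟩, fun a => ?_⟩
  · rw [happ, h₁one, h₂one, mul_one, mul_one, ← Complex.ofReal_add, hst, Complex.ofReal_one]
  · rw [happ]
    exact add_nonneg (mul_nonneg (Complex.zero_le_real.mpr hs) (h₁pos a))
      (mul_nonneg (Complex.zero_le_real.mpr ht) (h₂pos a))
  · rw [happ, happ, h₁even, h₂even]

variable [StarModule ℂ A]

lemma isState_comp_inclL {φ : A →L[ℂ] ℂ} (hφ : IsState φ) : IsState (φ.comp (inclL θ)) :=
  ⟨hφ.1, fun b => hφ.2 b⟩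

noncomputable def evenRestrict : (A →L[ℂ] ℂ) →ₗ[ℝ] (↥(evenSA θ) →L[ℂ] ℂ) where
  toFun φ := φ.comp (inclL θ)
  map_add' _ _ := rfl
  map_smul' _ _ := rfl

end Graded

section CStar

variable {A : Type*} [CStarAlgebra A] (θ : A ≃⋆ₐ[ℂ] A)

noncomputable def evenProj (hθ : ∀ a, θ (θ a) = a) : A →L[ℂ] ↥(evenSA θ) where
  toFun a := ⟨(2⁻¹ : ℂ) • (a + θ a), by
    change θ _ = _
    rw [map_smul, map_add, hθ, add_comm]⟩
  map_add' a b := Subtype.ext <| by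
    change (2⁻¹ : ℂ) • (a + b + θ (a + b)) = (2⁻¹ : ℂ) • (a + θ a) + (2⁻¹ : ℂ) • (b + θ b)
    rw [map_add, ← smul_add, add_add_add_comm]
  map_smul' c a := Subtype.ext <| by
    change (2⁻¹ : ℂ) • (c • a + θ (c • a)) = c • (2⁻¹ : ℂ) • (a + θ a)
    rw [map_smul, ← smul_add, smul_comm]
  cont := by
    have := (StarAlgEquiv.isometry θ).continuous
    fun_prop

variable (hθ : ∀ a, θ (θ a) = a)

lemma coe_evenProj (a : A) : (evenProj θ hθ a : A) = (2⁻¹ : ℂ) • (a + θ a) := rfl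

lemma evenProj_coe (b : evenSA θ) : evenProj θ hθ b = b := by
  ext
  rw [coe_evenProj, b.2, ← two_smul ℂ, smul_smul, inv_mul_cancel₀ two_ne_zero, one_smul]

lemma evenProj_map (a : A) : evenProj θ hθ (θ a) = evenProj θ hθ a := by
  ext
  rw [coe_evenProj, coe_evenProj, hθ, add_comm]

lemma apply_evenProj_of_mem_evenStates {φ : A →L[ℂ] ℂ} (hφ : φ ∈ evenStates θ) (a : A) :
    φ (evenProj θ hθ a) = φ a := by
  rw [coe_evenProj, map_smul, map_add, hφ.2, smul_eq_mul]
  ring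

lemma evenProj_star_mul_self (a : A) : ∃ y : evenSA θ,
    evenProj θ hθ (star a * a) = star (evenProj θ hθ a) * evenProj θ hθ a + star y * y := by
  let _ := CStarAlgebra.spectralOrder A
  have _ := CStarAlgebra.spectralOrderedRing A
  set v := (2⁻¹ : ℂ) • (a - θ a)
  have hv : θ (star v * v) = star v * v := by
    have : θ v = -v := by rw [map_smul, map_sub, hθ, ← smul_neg, neg_sub]
    rw [map_mul, map_star, this, star_neg, neg_mul_neg]
  have hv₀ : 0 ≤ star v * v := star_mul_self_nonneg v
  refine ⟨⟨CFC.sqrt (star v * v), ?_⟩, ?_⟩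
  · change θ _ = _
    rw [map_sqrt θ hv₀, hv]
  · ext
    change (2⁻¹ : ℂ) • (star a * a + θ (star a * a)) =
      star ((2⁻¹ : ℂ) • (a + θ a)) * ((2⁻¹ : ℂ) • (a + θ a)) +
        star (CFC.sqrt (star v * v)) * CFC.sqrt (star v * v)
    rw [(CFC.sqrt_nonneg (star v * v)).isSelfAdjoint.star_eq, CFC.sqrt_mul_sqrt_self _ hv₀,
      map_mul, map_star]
    exact half_smul_star_mul_self_add a (θ a)

lemma comp_evenProj_mem_evenStates {ψ : ↥(evenSA θ) →L[ℂ] ℂ} (hψ : IsState ψ) :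
    ψ.comp (evenProj θ hθ) ∈ evenStates θ := by
  refine ⟨⟨(congrArg ψ (evenProj_coe θ hθ 1)).trans hψ.1, fun a => ?_⟩, fun a => ?_⟩
  · obtain ⟨y, hy⟩ := evenProj_star_mul_self θ hθ a
    rw [ContinuousLinearMap.comp_apply, hy, map_add]
    exact add_nonneg (hψ.2 _) (hψ.2 y)
  · rw [ContinuousLinearMap.comp_apply, evenProj_map]
    rfl

include hθ in
theorem bijOn_evenRestrict :
    BijOn (evenRestrict θ) (evenStates θ) {ψ : ↥(evenSA θ) →L[ℂ] ℂ | IsState ψ} := by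
  refine ⟨fun φ hφ => isState_comp_inclL θ hφ.1, fun φ₁ hφ₁ φ₂ hφ₂ h => ?_, fun ψ hψ => ?_⟩
  · ext a
    rw [← apply_evenProj_of_mem_evenStates θ hθ hφ₁, ← apply_evenProj_of_mem_evenStates θ hθ hφ₂]
    exact DFunLike.congr_fun h (evenProj θ hθ a)
  · refine ⟨ψ.comp (evenProj θ hθ), comp_evenProj_mem_evenStates θ hθ hψ, ?_⟩
    ext b
    exact congrArg ψ (evenProj_coe θ hθ b)

end CStar

theorem stmt6 {A : Type*} [NormedRing A] [StarRing A] [CStarRing A]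
    [NormedAlgebra ℂ A] [CompleteSpace A] [StarModule ℂ A]
    (θ : A ≃⋆ₐ[ℂ] A) (hθ : ∀ a, θ (θ a) = a) :
    let R : (A →L[ℂ] ℂ) → (↥(evenSA θ) →L[ℂ] ℂ) := fun φ => φ.comp (inclL θ)
    -- bijection from even states onto states of A₊
    Set.BijOn R (evenStates θ) {ψ : ↥(evenSA θ) →L[ℂ] ℂ | IsState ψ} ∧
    -- affine
    (∀ φ ψ : A →L[ℂ] ℂ, ∀ t : ℝ, 0 ≤ t → t ≤ 1 →
      R ((t : ℂ) • φ + ((1 - t : ℝ) : ℂ) • ψ) =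
        (t : ℂ) • R φ + ((1 - t : ℝ) : ℂ) • R ψ) ∧
    -- extreme even states correspond exactly to pure states of A₊
    (∀ ω ∈ evenStates θ,
      ω ∈ Set.extremePoints ℝ (evenStates θ) ↔
        R ω ∈ Set.extremePoints ℝ {ψ : ↥(evenSA θ) →L[ℂ] ℂ | IsState ψ}) := by
  let _ : CStarAlgebra A := ⟨⟩
  have hbij := bijOn_evenRestrict θ hθ
  exact ⟨hbij, fun _ _ _ _ _ => rfl, fun ω hω =>
    mem_extremePoints_iff_of_bijOn (evenRestrict θ) (convex_evenStates θ) hbij hω⟩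
end

section
/- Let (A₁, θ₁), (A₂, θ₂) be Z₂-graded unital C*-algebras and ω₁, ω₂ states on A₁, A₂ respectively, with neither ω₁ nor ω₂ even. Then the product functional ω₁ × ω₂ on the algebraic Z₂-graded (Fermi) tensor product A₁ ⊛ A₂ is not positive. -/
/-! If a state ω on a graded algebra is not even, then ω(θ a - a) ≠ 0 for some a, and taking real
and imaginary parts of the odd element θ a - a yields an odd self-adjoint a with ω(a) ≠ 0; being
self-adjoint, ω(a) is real. For such a₁, a₂ the element x = 1 ⊗ 1 + i a₁ ⊗ a₂ is self-adjoint in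
A₁ ⊛ A₂, because the twist makes a₁ ⊗ a₂ skew-adjoint, and x* x = 1 ⊗ 1 + 2i a₁ ⊗ a₂ + a₁² ⊗ a₂²
because the twist cancels i². So (ω₁ × ω₂)(x* x) has imaginary part 2 ω₁(a₁) ω₂(a₂) ≠ 0 and is not
positive. -/

open scoped ComplexOrder TensorProduct

/-- The product functional ω₁ × ω₂ on the algebraic tensor product,
`(ω₁ × ω₂)(a ⊗ b) = ω₁(a)·ω₂(b)`. -/
noncomputable def prodState {A₁ A₂ : Type*} [NormedRing A₁] [NormedAlgebra ℂ A₁]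
    [NormedRing A₂] [NormedAlgebra ℂ A₂]
    (ω₁ : A₁ →L[ℂ] ℂ) (ω₂ : A₂ →L[ℂ] ℂ) : A₁ ⊗[ℂ] A₂ →ₗ[ℂ] ℂ :=
  TensorProduct.lift ((ω₁.toLinearMap).smulRight (ω₂.toLinearMap))

open Complex TensorProduct

section Grading

variable {A : Type*} [Ring A] [StarRing A] [Algebra ℂ A]

theorem exists_even_add_odd (θ : A ≃⋆ₐ[ℂ] A) (hθ : ∀ a, θ (θ a) = a) (b : A) :
    ∃ e o : A, θ e = e ∧ θ o = -o ∧ e + o = b :=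
  ⟨(2⁻¹ : ℂ) • (b + θ b), (2⁻¹ : ℂ) • (b - θ b),
    by rw [map_smul, map_add, hθ, add_comm],
    by rw [map_smul, map_sub, hθ, ← smul_neg, neg_sub],
    by rw [← smul_add, add_add_sub_cancel, ← two_smul ℂ b, smul_smul,
      inv_mul_cancel₀ two_ne_zero, one_smul]⟩

theorem exists_odd_apply_ne_zero {F : Type*} [FunLike F A ℂ] [AddMonoidHomClass F A ℂ]
    (θ : A ≃⋆ₐ[ℂ] A) (hθ : ∀ a, θ (θ a) = a) (ω : F) (hω : ¬ ∀ a, ω (θ a) = ω a) :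
    ∃ b : A, θ b = -b ∧ ω b ≠ 0 := by
  push Not at hω
  obtain ⟨a, ha⟩ := hω
  exact ⟨θ a - a, by rw [map_sub, hθ, neg_sub], by rwa [map_sub, sub_ne_zero]⟩

variable [StarModule ℂ A]

theorem exists_odd_isSelfAdjoint_apply_ne_zero {F : Type*} [FunLike F A ℂ]
    [LinearMapClass F ℂ A ℂ] (θ : A ≃⋆ₐ[ℂ] A) (hθ : ∀ a, θ (θ a) = a) (ω : F)
    (hω : ¬ ∀ a, ω (θ a) = ω a) :
    ∃ a : A, θ a = -a ∧ IsSelfAdjoint a ∧ ω a ≠ 0 := by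
  obtain ⟨b, hb, hωb⟩ := exists_odd_apply_ne_zero θ hθ ω hω
  have hb' : θ (star b) = -star b := by rw [map_star, hb, star_neg]
  set x := b + star b
  set y := I • (star b - b)
  -- `x` and `y` are twice the real and imaginary parts of `b`
  have hxy : ω x + I * ω y = 2 * ω b := by
    rw [← smul_eq_mul, ← map_smul, ← map_add, smul_smul, I_mul_I, neg_one_smul, neg_sub,
      add_add_sub_cancel, ← two_smul ℂ b, map_smul, smul_eq_mul]
  by_cases hωx : ω x = 0
  · refine ⟨y, ?_, ?_, fun hωy => ?_⟩
    · rw [map_smul, map_sub, hb, hb', ← smul_neg, neg_sub_neg, neg_sub]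
    · simp only [y, IsSelfAdjoint, star_smul, star_sub, star_star, Complex.star_def, conj_I,
        neg_smul, ← smul_neg, neg_sub]
    · rw [hωx, hωy] at hxy
      exact hωb (by simpa using hxy.symm)
  · exact ⟨x, by rw [map_add, hb, hb', neg_add], IsSelfAdjoint.add_star_self b, hωx⟩

end Grading

theorem im_apply_eq_zero_of_isSelfAdjoint {A F : Type*} [Ring A] [StarRing A] [FunLike F A ℂ]
    [AddMonoidHomClass F A ℂ] {ω : F} (hω : ∀ a, 0 ≤ ω (star a * a)) {a : A}
    (ha : IsSelfAdjoint a) : (ω a).im = 0 := by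
  have hdiff : star (1 + a) * (1 + a) - star (1 - a) * (1 - a) = a + a + a + a := by
    rw [star_add, star_sub, star_one, ha.star_eq]
    noncomm_ring
  have h := congrArg (fun z : ℂ => z.im) (congrArg ω hdiff)
  simp only [map_sub, map_add, sub_im, add_im, ← (Complex.nonneg_iff.mp (hω _)).2] at h
  linarith

section Fermi

variable {A₁ A₂ : Type*} [Ring A₁] [StarRing A₁] [Algebra ℂ A₁]
  [Ring A₂] [StarRing A₂] [Algebra ℂ A₂]

-- `s, t = ±1` record the parities of homogeneous elements, as eigenvalues of the gradings
def IsFermiMul (θ₁ : A₁ ≃⋆ₐ[ℂ] A₁) (θ₂ : A₂ ≃⋆ₐ[ℂ] A₂)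
    (mu : A₁ ⊗[ℂ] A₂ →ₗ[ℂ] A₁ ⊗[ℂ] A₂ →ₗ[ℂ] A₁ ⊗[ℂ] A₂) : Prop :=
  ∀ (a₁ b₁ : A₁) (a₂ b₂ : A₂) (s t : ℂ),
    (s = 1 ∨ s = -1) → (t = 1 ∨ t = -1) → θ₂ a₂ = s • a₂ → θ₁ b₁ = t • b₁ →
    mu (a₁ ⊗ₜ[ℂ] a₂) (b₁ ⊗ₜ[ℂ] b₂) =
      (if s = -1 ∧ t = -1 then (-1 : ℂ) else 1) • ((a₁ * b₁) ⊗ₜ[ℂ] (a₂ * b₂))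

def IsFermiStar (θ₁ : A₁ ≃⋆ₐ[ℂ] A₁) (θ₂ : A₂ ≃⋆ₐ[ℂ] A₂)
    (sta : A₁ ⊗[ℂ] A₂ →ₛₗ[starRingEnd ℂ] A₁ ⊗[ℂ] A₂) : Prop :=
  ∀ (a₁ : A₁) (a₂ : A₂) (s t : ℂ),
    (s = 1 ∨ s = -1) → (t = 1 ∨ t = -1) → θ₁ a₁ = s • a₁ → θ₂ a₂ = t • a₂ →
    sta (a₁ ⊗ₜ[ℂ] a₂) =
      (if s = -1 ∧ t = -1 then (-1 : ℂ) else 1) • ((star a₁) ⊗ₜ[ℂ] (star a₂))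

variable {θ₁ : A₁ ≃⋆ₐ[ℂ] A₁} {θ₂ : A₂ ≃⋆ₐ[ℂ] A₂}

namespace IsFermiMul

variable {mu : A₁ ⊗[ℂ] A₂ →ₗ[ℂ] A₁ ⊗[ℂ] A₂ →ₗ[ℂ] A₁ ⊗[ℂ] A₂}

theorem tmul_of_even_left (hmu : IsFermiMul θ₁ θ₂ mu) {a₁ b₁ : A₁} {a₂ b₂ : A₂}
    (ha₂ : θ₂ a₂ = a₂) (hb₁ : θ₁ b₁ = b₁ ∨ θ₁ b₁ = -b₁) :
    mu (a₁ ⊗ₜ a₂) (b₁ ⊗ₜ b₂) = (a₁ * b₁) ⊗ₜ (a₂ * b₂) := by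
  rcases hb₁ with hb₁ | hb₁
  · rw [hmu a₁ b₁ a₂ b₂ 1 1 (.inl rfl) (.inl rfl) (by rwa [one_smul]) (by rwa [one_smul]),
      if_neg (by norm_num), one_smul]
  · rw [hmu a₁ b₁ a₂ b₂ 1 (-1) (.inl rfl) (.inr rfl) (by rwa [one_smul])
      (by rwa [neg_one_smul]), if_neg (by norm_num), one_smul]

theorem tmul_of_even_right (hmu : IsFermiMul θ₁ θ₂ mu) {a₁ b₁ : A₁} {a₂ b₂ : A₂}
    (ha₂ : θ₂ a₂ = a₂ ∨ θ₂ a₂ = -a₂) (hb₁ : θ₁ b₁ = b₁) :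
    mu (a₁ ⊗ₜ a₂) (b₁ ⊗ₜ b₂) = (a₁ * b₁) ⊗ₜ (a₂ * b₂) := by
  rcases ha₂ with ha₂ | ha₂
  · exact hmu.tmul_of_even_left ha₂ (.inl hb₁)
  · rw [hmu a₁ b₁ a₂ b₂ (-1) 1 (.inr rfl) (.inl rfl) (by rwa [neg_one_smul])
      (by rwa [one_smul]), if_neg (by norm_num), one_smul]

theorem tmul_of_odd (hmu : IsFermiMul θ₁ θ₂ mu) {a₁ b₁ : A₁} {a₂ b₂ : A₂}
    (ha₂ : θ₂ a₂ = -a₂) (hb₁ : θ₁ b₁ = -b₁) :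
    mu (a₁ ⊗ₜ a₂) (b₁ ⊗ₜ b₂) = -((a₁ * b₁) ⊗ₜ (a₂ * b₂)) := by
  rw [hmu a₁ b₁ a₂ b₂ (-1) (-1) (.inr rfl) (.inr rfl) (by rwa [neg_one_smul])
    (by rwa [neg_one_smul]), if_pos ⟨rfl, rfl⟩, neg_one_smul]

theorem one_mul (hmu : IsFermiMul θ₁ θ₂ mu) (hθ₁ : ∀ a, θ₁ (θ₁ a) = a) (x : A₁ ⊗[ℂ] A₂) :
    mu (1 ⊗ₜ 1) x = x := by
  induction x using TensorProduct.induction_on with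
  | zero => rw [map_zero]
  | tmul b₁ b₂ =>
    obtain ⟨e, o, he, ho, rfl⟩ := exists_even_add_odd θ₁ hθ₁ b₁
    rw [add_tmul, map_add, hmu.tmul_of_even_left (map_one θ₂) (.inl he),
      hmu.tmul_of_even_left (map_one θ₂) (.inr ho), _root_.one_mul, _root_.one_mul,
      _root_.one_mul]
  | add x y hx hy => rw [map_add, hx, hy]

theorem mul_one (hmu : IsFermiMul θ₁ θ₂ mu) (hθ₂ : ∀ a, θ₂ (θ₂ a) = a) (x : A₁ ⊗[ℂ] A₂) :
    mu x (1 ⊗ₜ 1) = x := by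
  induction x using TensorProduct.induction_on with
  | zero => rw [map_zero, LinearMap.zero_apply]
  | tmul a₁ a₂ =>
    obtain ⟨e, o, he, ho, rfl⟩ := exists_even_add_odd θ₂ hθ₂ a₂
    rw [tmul_add, map_add, LinearMap.add_apply, hmu.tmul_of_even_right (.inl he) (map_one θ₁),
      hmu.tmul_of_even_right (.inr ho) (map_one θ₁), _root_.mul_one, _root_.mul_one,
      _root_.mul_one]
  | add x y hx hy => rw [map_add, LinearMap.add_apply, hx, hy]

theorem mul_self_one_add_I_smul_tmul (hmu : IsFermiMul θ₁ θ₂ mu) (hθ₁ : ∀ a, θ₁ (θ₁ a) = a)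
    (hθ₂ : ∀ a, θ₂ (θ₂ a) = a) {a₁ : A₁} {a₂ : A₂} (ha₁ : θ₁ a₁ = -a₁) (ha₂ : θ₂ a₂ = -a₂) :
    mu (1 ⊗ₜ 1 + I • (a₁ ⊗ₜ a₂)) (1 ⊗ₜ 1 + I • (a₁ ⊗ₜ a₂)) =
      1 ⊗ₜ 1 + (2 * I) • (a₁ ⊗ₜ a₂) + (a₁ * a₁) ⊗ₜ (a₂ * a₂) := by
  rw [map_add (mu _), hmu.mul_one hθ₂, map_smul, map_add, LinearMap.add_apply, hmu.one_mul hθ₁,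
    map_smul, LinearMap.smul_apply, hmu.tmul_of_odd ha₂ ha₁]
  match_scalars
  · rfl
  · ring
  · rw [mul_neg_one, mul_neg, I_mul_I, neg_neg]

end IsFermiMul

namespace IsFermiStar

variable {sta : A₁ ⊗[ℂ] A₂ →ₛₗ[starRingEnd ℂ] A₁ ⊗[ℂ] A₂}

theorem one_tmul_one (hsta : IsFermiStar θ₁ θ₂ sta) : sta (1 ⊗ₜ 1) = 1 ⊗ₜ 1 := by
  rw [hsta 1 1 1 1 (.inl rfl) (.inl rfl) (by rw [map_one, one_smul])
    (by rw [map_one, one_smul]), if_neg (by norm_num), one_smul, star_one, star_one]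

theorem tmul_of_odd (hsta : IsFermiStar θ₁ θ₂ sta) {a₁ : A₁} {a₂ : A₂} (ha₁ : θ₁ a₁ = -a₁)
    (ha₂ : θ₂ a₂ = -a₂) :
    sta (a₁ ⊗ₜ a₂) = -(star a₁ ⊗ₜ star a₂) := by
  rw [hsta a₁ a₂ (-1) (-1) (.inr rfl) (.inr rfl) (by rwa [neg_one_smul])
    (by rwa [neg_one_smul]), if_pos ⟨rfl, rfl⟩, neg_one_smul]

theorem one_add_I_smul_tmul_of_odd (hsta : IsFermiStar θ₁ θ₂ sta) {a₁ : A₁} {a₂ : A₂}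
    (ha₁ : θ₁ a₁ = -a₁) (ha₂ : θ₂ a₂ = -a₂) (hsa₁ : IsSelfAdjoint a₁) (hsa₂ : IsSelfAdjoint a₂) :
    sta (1 ⊗ₜ 1 + I • (a₁ ⊗ₜ a₂)) = 1 ⊗ₜ 1 + I • (a₁ ⊗ₜ a₂) := by
  rw [map_add, LinearMap.map_smulₛₗ, hsta.one_tmul_one, hsta.tmul_of_odd ha₁ ha₂, hsa₁.star_eq,
    hsa₂.star_eq, conj_I, neg_smul, smul_neg, neg_neg]

end IsFermiStar

end Fermi

theorem prodState_tmul {A₁ A₂ : Type*} [NormedRing A₁] [NormedAlgebra ℂ A₁] [NormedRing A₂]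
    [NormedAlgebra ℂ A₂] (ω₁ : A₁ →L[ℂ] ℂ) (ω₂ : A₂ →L[ℂ] ℂ) (a₁ : A₁) (a₂ : A₂) :
    prodState ω₁ ω₂ (a₁ ⊗ₜ a₂) = ω₁ a₁ * ω₂ a₂ :=
  rfl

theorem stmt8_general {A₁ A₂ : Type*}
    [NormedRing A₁] [StarRing A₁] [NormedAlgebra ℂ A₁] [StarModule ℂ A₁]
    [NormedRing A₂] [StarRing A₂] [NormedAlgebra ℂ A₂] [StarModule ℂ A₂]
    (θ₁ : A₁ ≃⋆ₐ[ℂ] A₁) (hθ₁ : ∀ a, θ₁ (θ₁ a) = a)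
    (θ₂ : A₂ ≃⋆ₐ[ℂ] A₂) (hθ₂ : ∀ a, θ₂ (θ₂ a) = a)
    -- the Fermi (twisted) multiplication
    (mu : A₁ ⊗[ℂ] A₂ →ₗ[ℂ] A₁ ⊗[ℂ] A₂ →ₗ[ℂ] A₁ ⊗[ℂ] A₂)
    (hmu : ∀ (a₁ b₁ : A₁) (a₂ b₂ : A₂) (s t : ℂ),
      (s = 1 ∨ s = -1) → (t = 1 ∨ t = -1) → θ₂ a₂ = s • a₂ → θ₁ b₁ = t • b₁ →
      mu (a₁ ⊗ₜ[ℂ] a₂) (b₁ ⊗ₜ[ℂ] b₂) =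
        (if s = -1 ∧ t = -1 then (-1 : ℂ) else 1) • ((a₁ * b₁) ⊗ₜ[ℂ] (a₂ * b₂)))
    -- the Fermi (twisted) involution
    (sta : A₁ ⊗[ℂ] A₂ →ₛₗ[starRingEnd ℂ] A₁ ⊗[ℂ] A₂)
    (hsta : ∀ (a₁ : A₁) (a₂ : A₂) (s t : ℂ),
      (s = 1 ∨ s = -1) → (t = 1 ∨ t = -1) → θ₁ a₁ = s • a₁ → θ₂ a₂ = t • a₂ →
      sta (a₁ ⊗ₜ[ℂ] a₂) =
        (if s = -1 ∧ t = -1 then (-1 : ℂ) else 1) • ((star a₁) ⊗ₜ[ℂ] (star a₂)))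
    (ω₁ : A₁ →L[ℂ] ℂ) (hω₁ : IsState ω₁) (hne₁ : ¬ ∀ a : A₁, ω₁ (θ₁ a) = ω₁ a)
    (ω₂ : A₂ →L[ℂ] ℂ) (hω₂ : IsState ω₂) (hne₂ : ¬ ∀ a : A₂, ω₂ (θ₂ a) = ω₂ a) :
    ¬ ∀ x : A₁ ⊗[ℂ] A₂, 0 ≤ prodState ω₁ ω₂ (mu (sta x) x) := by
  intro hpos
  obtain ⟨a₁, hodd₁, hsa₁, hωa₁⟩ := exists_odd_isSelfAdjoint_apply_ne_zero θ₁ hθ₁ ω₁ hne₁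
  obtain ⟨a₂, hodd₂, hsa₂, hωa₂⟩ := exists_odd_isSelfAdjoint_apply_ne_zero θ₂ hθ₂ ω₂ hne₂
  have h := hpos (1 ⊗ₜ 1 + I • (a₁ ⊗ₜ a₂))
  rw [IsFermiStar.one_add_I_smul_tmul_of_odd hsta hodd₁ hodd₂ hsa₁ hsa₂,
    IsFermiMul.mul_self_one_add_I_smul_tmul hmu hθ₁ hθ₂ hodd₁ hodd₂] at h
  simp only [map_add, map_smul, prodState_tmul, hω₁.1, hω₂.1, mul_one, smul_eq_mul] at h
  have hsq : 0 ≤ ω₁ (a₁ * a₁) * ω₂ (a₂ * a₂) := by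
    simpa only [hsa₁.star_eq, hsa₂.star_eq] using mul_nonneg (hω₁.2 a₁) (hω₂.2 a₂)
  have him₁ := im_apply_eq_zero_of_isSelfAdjoint hω₁.2 hsa₁
  have him₂ := im_apply_eq_zero_of_isSelfAdjoint hω₂.2 hsa₂
  have hre : (ω₁ a₁).re * (ω₂ a₂).re = 0 := by
    have him := (Complex.nonneg_iff.mp h).2
    simp only [add_im, ← (Complex.nonneg_iff.mp hsq).2, mul_im, mul_re, him₁, him₂, one_im, I_re,
      I_im, re_ofNat, im_ofNat] at him
    linarith
  rcases mul_eq_zero.mp hre with hre₁ | hre₂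
  · exact hωa₁ (Complex.ext hre₁ him₁)
  · exact hωa₂ (Complex.ext hre₂ him₂)

theorem stmt8 {A₁ A₂ : Type*}
    [NormedRing A₁] [StarRing A₁] [CStarRing A₁] [NormedAlgebra ℂ A₁]
    [CompleteSpace A₁] [StarModule ℂ A₁]
    [NormedRing A₂] [StarRing A₂] [CStarRing A₂] [NormedAlgebra ℂ A₂]
    [CompleteSpace A₂] [StarModule ℂ A₂]
    (θ₁ : A₁ ≃⋆ₐ[ℂ] A₁) (hθ₁ : ∀ a, θ₁ (θ₁ a) = a)
    (θ₂ : A₂ ≃⋆ₐ[ℂ] A₂) (hθ₂ : ∀ a, θ₂ (θ₂ a) = a)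
    -- the Fermi (twisted) multiplication
    (mu : A₁ ⊗[ℂ] A₂ →ₗ[ℂ] A₁ ⊗[ℂ] A₂ →ₗ[ℂ] A₁ ⊗[ℂ] A₂)
    (hmu : ∀ (a₁ b₁ : A₁) (a₂ b₂ : A₂) (s t : ℂ),
      (s = 1 ∨ s = -1) → (t = 1 ∨ t = -1) → θ₂ a₂ = s • a₂ → θ₁ b₁ = t • b₁ →
      mu (a₁ ⊗ₜ[ℂ] a₂) (b₁ ⊗ₜ[ℂ] b₂) =
        (if s = -1 ∧ t = -1 then (-1 : ℂ) else 1) • ((a₁ * b₁) ⊗ₜ[ℂ] (a₂ * b₂)))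
    -- the Fermi (twisted) involution
    (sta : A₁ ⊗[ℂ] A₂ →ₛₗ[starRingEnd ℂ] A₁ ⊗[ℂ] A₂)
    (hsta : ∀ (a₁ : A₁) (a₂ : A₂) (s t : ℂ),
      (s = 1 ∨ s = -1) → (t = 1 ∨ t = -1) → θ₁ a₁ = s • a₁ → θ₂ a₂ = t • a₂ →
      sta (a₁ ⊗ₜ[ℂ] a₂) =
        (if s = -1 ∧ t = -1 then (-1 : ℂ) else 1) • ((star a₁) ⊗ₜ[ℂ] (star a₂)))
    (ω₁ : A₁ →L[ℂ] ℂ) (hω₁ : IsState ω₁) (hne₁ : ¬ ∀ a : A₁, ω₁ (θ₁ a) = ω₁ a)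
    (ω₂ : A₂ →L[ℂ] ℂ) (hω₂ : IsState ω₂) (hne₂ : ¬ ∀ a : A₂, ω₂ (θ₂ a) = ω₂ a) :
    ¬ ∀ x : A₁ ⊗[ℂ] A₂, 0 ≤ prodState ω₁ ω₂ (mu (sta x) x) :=
  stmt8_general θ₁ hθ₁ θ₂ hθ₂ mu hmu sta hsta ω₁ hω₁ hne₁ ω₂ hω₂ hne₂
end
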